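/- In the q-shuffle algebra on two generators x,y, the generators satisfy the dual q-Serre relation: y⋆y⋆y⋆x - [3]_q y⋆y⋆x⋆y + [3]_q y⋆x⋆y⋆y - x⋆y⋆y⋆y = 0. -/

import Mathlib

open scoped Classical

inductive Letter | x | y
deriving DecidableEq

instance : Fintype Letter := ⟨{.x, .y}, fun a => by cases a <;> simp⟩

/-- x ↦ 1, y ↦ -1 -/
def bar : Letter → ℤ
  | .x => 1
  | .y => -1

/-- σ swaps the letters x and y. -/
def sigma : Letter → Letter
  | .x => .y
  | .y => .x

/-- the pairing ⟨u,v⟩ : 2 if u = v, -2 otherwise. -/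
def pair : Letter → Letter → ℤ := fun u v => if u = v then 2 else -2

noncomputable section

/-- The free associative algebra on the two letters x, y (with its word basis). -/
abbrev V (F : Type*) [Field F] := MonoidAlgebra F (FreeMonoid Letter)

variable {F : Type*} [Field F]

/-- the basis word of V corresponding to a list of letters -/
def wd (w : List Letter) : V F := MonoidAlgebra.single (FreeMonoid.ofList w) 1

/-- the q-shuffle product of two words, by the left recursion -/
def shuffleWord (q : F) : List Letter → List Letter → V F
  | [], v => wd v
  | u1 :: ut, [] => wd (u1 :: ut)
  | u1 :: ut, v1 :: vt =>
      wd [u1] * shuffleWord q ut (v1 :: vt)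
      + q ^ (((u1 :: ut).map (fun a => pair a v1)).sum) •
          (wd [v1] * shuffleWord q (u1 :: ut) vt)
termination_by u v => u.length + v.length

/-- the q-shuffle product on V, extended bilinearly -/
def shuffle (q : F) (a b : V F) : V F :=
  a.coeff.sum fun u cu => b.coeff.sum fun v cv =>
    (cu * cv) • shuffleWord q (FreeMonoid.toList u) (FreeMonoid.toList v)

/-- the quantum integer [m]_q -/
def qint (q : F) (m : ℤ) : F := (q ^ m - q ^ (-m)) / (q - q⁻¹)

/-- the quantum factorial [m]_q! -/
def qfac (q : F) (m : ℤ) : F := ∏ j ∈ Finset.range m.toNat, qint q ((j : ℤ) + 1)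

/-- e_i = ā_1 + ⋯ + ā_i, the i-th elevation of the word w -/
def esum (w : List Letter) (i : ℕ) : ℤ := ((w.take i).map bar).sum

/-- A word is Catalan when all partial sums of bar are nonnegative and the total is zero. -/
def IsCatalan (w : List Letter) : Prop :=
  (∀ i, i ≤ w.length → 0 ≤ esum w i) ∧ esum w w.length = 0

/-- the coefficient C(w) = ∏_{i=0}^{2n} [1 + e_i]_q -/
def Ccoef (q : F) (w : List Letter) : F :=
  ∏ i ∈ Finset.range (w.length + 1), qint q (1 + esum w i)

/-- the n-th Catalan element C_n = ∑_{w ∈ Cat_n} C(w) w  -/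
def catalanElt (q : F) (n : ℕ) : V F :=
  ∑ f : Fin (2 * n) → Letter,
    if IsCatalan (List.ofFn f) then Ccoef q (List.ofFn f) • wd (List.ofFn f) else 0

/-- the antiautomorphism ζ : reverse the word and swap x,y, extended linearly -/
def zeta (a : V F) : V F :=
  a.coeff.sum fun w c =>
    MonoidAlgebra.single (FreeMonoid.ofList (((FreeMonoid.toList w).map sigma).reverse)) c

/-- The profile of a word: delete from the elevation sequence every interior e_i
    such that e_{i+1}-e_i and e_i-e_{i-1} have the same sign. -/
def profile (w : List Letter) : List ℤ :=
  (List.range (w.length + 1)).filterMap fun i =>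
    if i = 0 ∨ i = w.length then some (esum w i)
    else if 0 < (esum w (i + 1) - esum w i) * (esum w i - esum w (i - 1)) then none
    else some (esum w i)

/-- The list (ℓ_0, h_1, ℓ_1, h_2, …, h_r, ℓ_r). -/
def P (r : ℕ) (ℓ h : ℕ → ℤ) : List ℤ :=
  List.ofFn fun i : Fin (2 * r + 1) =>
    if i.val % 2 = 0 then ℓ (i.val / 2) else h ((i.val + 1) / 2)

/-- the word x^{h_1} y^{h_1-ℓ_1} x^{h_2-ℓ_1} y^{h_2-ℓ_2} ⋯ x^{h_r-ℓ_{r-1}} y^{h_r} -/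
def explicitWord (r : ℕ) (ℓ h : ℕ → ℤ) : List Letter :=
  (List.range r).flatMap fun i =>
    List.replicate (h (i + 1) - ℓ i).toNat Letter.x ++
      List.replicate (h (i + 1) - ℓ (i + 1)).toNat Letter.y

/-- C(ℓ_0,h_1,…,h_r,ℓ_r), the ratio of q-factorials attached to a profile. -/
def Cprof (q : F) (r : ℕ) (ℓ h : ℕ → ℤ) : F :=
  (∏ i ∈ Finset.Icc 1 r, qfac q (h i) * qfac q (h i + 1)) /
    (∏ i ∈ Finset.range (r + 1), qfac q (ℓ i) * qfac q (ℓ i + 1))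

end

/-!
Each product in the relation is a word shuffled with a single letter on the right, and shuffling in
one letter `b` inserts it at every position of the word, weighted by `q` to the pairing of `b` with
the letters it passes. Expanding, the left side is a combination of the four words `yyyx`, `yyxy`,
`yxyy`, `xyyy`, whose coefficients are Laurent polynomials in `q` that vanish identically.
-/

section QShuffle

variable {F : Type*} [Field F] (q : F)

theorem wd_singleton_mul_wd (a : Letter) (w : List Letter) :
    (wd [a] * wd w : V F) = wd (a :: w) := by
  simp only [wd, MonoidAlgebra.single_mul_single, mul_one]
  rfl

theorem shuffle_wd_wd (u v : List Letter) :
    shuffle q (wd u) (wd v) = shuffleWord q u v := by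
  simp only [shuffle, wd, MonoidAlgebra.coeff_single]
  rw [Finsupp.sum_single_index, Finsupp.sum_single_index] <;> simp

theorem shuffle_add_left (a₁ a₂ b : V F) :
    shuffle q (a₁ + a₂) b = shuffle q a₁ b + shuffle q a₂ b := by
  unfold shuffle
  rw [MonoidAlgebra.coeff_add, Finsupp.sum_add_index] <;>
    intros <;> simp [add_mul, add_smul, Finsupp.sum_add]

theorem shuffle_smul_left (c : F) (a b : V F) :
    shuffle q (c • a) b = c • shuffle q a b := by
  unfold shuffle
  rw [MonoidAlgebra.coeff_smul, Finsupp.sum_smul_index, Finsupp.smul_sum] <;>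
    simp [mul_assoc, mul_smul, Finsupp.smul_sum]

theorem shuffleWord_singleton_right (b : Letter) (u : List Letter) :
    shuffleWord q u [b] = ∑ i ∈ Finset.range (u.length + 1),
      q ^ ((u.drop i).map (pair · b)).sum • wd (u.take i ++ b :: u.drop i) := by
  induction u with
  | nil => simp [shuffleWord]
  | cons a t ih =>
    rw [shuffleWord, ih, List.length_cons, Finset.sum_range_succ' _ (t.length + 1)]
    simp [shuffleWord, Finset.mul_sum, wd_singleton_mul_wd]

end QShuffle

theorem stmt6_general {F : Type*} [Field F] (q : F) (hq0 : q ≠ 0) :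
    (shuffle q (shuffle q (shuffle q (wd [Letter.y] : V F) (wd [Letter.y] : V F)) (wd [Letter.y] : V F)) (wd [Letter.x] : V F))
      - (q ^ 2 + 1 + q ^ (-2 : ℤ)) • (shuffle q (shuffle q (shuffle q (wd [Letter.y] : V F) (wd [Letter.y] : V F)) (wd [Letter.x] : V F)) (wd [Letter.y] : V F))
      + (q ^ 2 + 1 + q ^ (-2 : ℤ)) • (shuffle q (shuffle q (shuffle q (wd [Letter.y] : V F) (wd [Letter.x] : V F)) (wd [Letter.y] : V F)) (wd [Letter.y] : V F))
      - (shuffle q (shuffle q (shuffle q (wd [Letter.x] : V F) (wd [Letter.y] : V F)) (wd [Letter.y] : V F)) (wd [Letter.y] : V F)) = 0 := by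
  simp only [shuffle_wd_wd, shuffleWord_singleton_right, shuffle_add_left, shuffle_smul_left,
    Finset.sum_range_succ, Finset.sum_range_zero, zero_add, List.length_cons, List.length_nil,
    List.take, List.drop, List.nil_append, List.cons_append, List.map, List.sum_cons, List.sum_nil,
    pair, reduceCtorEq, if_true, if_false]
  match_scalars <;> (norm_num; field_simp; ring)

theorem stmt6 {F : Type*} [Field F] (q : F) (hq0 : q ≠ 0)
    (hq : ∀ k : ℕ, 0 < k → q ^ k ≠ 1) :
    (shuffle q (shuffle q (shuffle q (wd [Letter.y] : V F) (wd [Letter.y] : V F)) (wd [Letter.y] : V F)) (wd [Letter.x] : V F))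
      - (q ^ 2 + 1 + q ^ (-2 : ℤ)) • (shuffle q (shuffle q (shuffle q (wd [Letter.y] : V F) (wd [Letter.y] : V F)) (wd [Letter.x] : V F)) (wd [Letter.y] : V F))
      + (q ^ 2 + 1 + q ^ (-2 : ℤ)) • (shuffle q (shuffle q (shuffle q (wd [Letter.y] : V F) (wd [Letter.x] : V F)) (wd [Letter.y] : V F)) (wd [Letter.y] : V F))
      - (shuffle q (shuffle q (shuffle q (wd [Letter.x] : V F) (wd [Letter.y] : V F)) (wd [Letter.y] : V F)) (wd [Letter.y] : V F)) = 0 :=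
  stmt6_general q hq0
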